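/- arXiv:2108.03282 — 2 statements merged into one kernel-verified Lean document; each statement's English description precedes it below -/
import Mathlib

section
/- For all real numbers a, b, c there exist real numbers α, β, γ such that, as 4×4 complex matrices, exp(−i·a·(X ⊗ X)) · exp(−i·b·(Z ⊗ I)) · exp(−i·c·(X ⊗ X)) = exp(−i·α·(Z ⊗ I)) · exp(−i·β·(X ⊗ X)) · exp(−i·γ·(Z ⊗ I)), where exp denotes the matrix exponential. This is the turnover property for the blocks of the transverse field Ising model. -/
/-!
`X ⊗ X` and `Z ⊗ I` are anticommuting involutions, so `exp (-i θ A) = cos θ + (-i sin θ) A` for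
either of them, and both triple products lie in the span of `1`, `X ⊗ X`, `Z ⊗ I` and their
product (a copy of the quaternions, in which these exponentials are unit quaternions). Comparing
coefficients, the turnover becomes the Euler-angle decomposition of `SU(2)`: the coefficient
vector of the left-hand side is a unit vector of `ℝ⁴`, and Hopf coordinates of it give `α, β, γ`.
-/

open Matrix
open scoped Kronecker

noncomputable section

/-- The Pauli matrix `X`. -/
def PauliX : Matrix (Fin 2) (Fin 2) ℂ := !![0, 1; 1, 0]

/-- The Pauli matrix `Z`. -/
def PauliZ : Matrix (Fin 2) (Fin 2) ℂ := !![1, 0; 0, -1]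

/-- The 2×2 identity matrix. -/
def I2 : Matrix (Fin 2) (Fin 2) ℂ := 1

/-- `expm A` is the matrix exponential of a 4×4 complex matrix. -/
def expm (A : Matrix (Fin 2 × Fin 2) (Fin 2 × Fin 2) ℂ) :
    Matrix (Fin 2 × Fin 2) (Fin 2 × Fin 2) ℂ :=
  NormedSpace.exp A

open Complex

section Involution

variable {A : Type*} [Ring A] [Algebra ℂ A] [TopologicalSpace A] [IsTopologicalRing A]
  [ContinuousSMul ℂ A] [T2Space A]

theorem exp_smul_of_mul_self_eq_one {M : A} (hM : M * M = 1) (z : ℂ) :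
    NormedSpace.exp (z • M) = cosh z • (1 : A) + sinh z • M := by
  have hpow : ∀ k : ℕ, M ^ (2 * k) = 1 := fun k => by rw [pow_mul, sq, hM, one_pow]
  rw [NormedSpace.exp_eq_tsum ℂ]
  refine HasSum.tsum_eq (HasSum.even_add_odd ?_ ?_)
  · convert (hasSum_cosh z).smul_const (1 : A) using 2 with k
    rw [smul_pow, hpow, smul_smul, div_eq_inv_mul]
  · convert (hasSum_sinh z).smul_const M using 2 with k
    rw [smul_pow, pow_succ M, hpow, one_mul, smul_smul, div_eq_inv_mul]

theorem exp_neg_I_mul_smul_of_mul_self_eq_one {M : A} (hM : M * M = 1) (θ : ℂ) :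
    NormedSpace.exp ((-I * θ) • M) = cos θ • (1 : A) + (-I * sin θ) • M := by
  rw [exp_smul_of_mul_self_eq_one hM, show -I * θ = -θ * I by ring, cosh_mul_I, sinh_mul_I,
    cos_neg, sin_neg]
  ring_nf

theorem exp_mul_exp_mul_exp_of_anticommute {P Q : A} (hP : P * P = 1) (hQ : Q * Q = 1)
    (hQP : Q * P = -(P * Q)) (a b c : ℂ) :
    NormedSpace.exp ((-I * a) • P) * NormedSpace.exp ((-I * b) • Q) *
        NormedSpace.exp ((-I * c) • P) =
      (cos b * cos (a + c)) • (1 : A) + (-I * (cos b * sin (a + c))) • P +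
        (-I * (sin b * cos (a - c))) • Q + (-(sin b * sin (a - c))) • (P * Q) := by
  have hPQP : P * Q * P = -Q := by rw [mul_assoc, hQP, mul_neg, ← mul_assoc, hP, one_mul]
  simp only [exp_neg_I_mul_smul_of_mul_self_eq_one hP, exp_neg_I_mul_smul_of_mul_self_eq_one hQ,
    add_mul, mul_add, smul_mul_smul, mul_one, one_mul, hP, hQP, hPQP, smul_neg,
    cos_add, sin_add, cos_sub, sin_sub]
  match_scalars
  · linear_combination cos b * sin a * sin c * I_sq
  · ring
  · linear_combination sin a * sin b * sin c * I_pow_three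
  · linear_combination (sin a * sin b * cos c - cos a * sin b * sin c) * I_sq

end Involution

theorem Real.exists_hopf_coordinates {w x y z : ℝ} (h : w ^ 2 + x ^ 2 + y ^ 2 + z ^ 2 = 1) :
    ∃ α β γ : ℝ, Real.cos β * Real.cos (α + γ) = w ∧ Real.cos β * Real.sin (α + γ) = x ∧
      Real.sin β * Real.cos (α - γ) = y ∧ Real.sin β * Real.sin (α - γ) = z := by
  set z₁ : ℂ := ⟨w, x⟩
  set z₂ : ℂ := ⟨y, z⟩
  have hnorm : ‖z₁‖ ^ 2 + ‖z₂‖ ^ 2 = 1 := by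
    simp only [z₁, z₂, Complex.sq_norm, normSq_mk]
    linarith
  have hcos : Real.cos (Real.arccos ‖z₁‖) = ‖z₁‖ :=
    Real.cos_arccos (by linarith [norm_nonneg z₁]) (by nlinarith [norm_nonneg z₁, norm_nonneg z₂])
  have hsin : Real.sin (Real.arccos ‖z₁‖) = ‖z₂‖ := by
    rw [Real.sin_arccos, show 1 - ‖z₁‖ ^ 2 = ‖z₂‖ ^ 2 by linarith, Real.sqrt_sq (norm_nonneg _)]
  refine ⟨(arg z₁ + arg z₂) / 2, Real.arccos ‖z₁‖, (arg z₁ - arg z₂) / 2, ?_⟩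
  rw [hcos, hsin, show (arg z₁ + arg z₂) / 2 + (arg z₁ - arg z₂) / 2 = arg z₁ by ring,
    show (arg z₁ + arg z₂) / 2 - (arg z₁ - arg z₂) / 2 = arg z₂ by ring,
    norm_mul_cos_arg, norm_mul_sin_arg, norm_mul_cos_arg, norm_mul_sin_arg]
  exact ⟨rfl, rfl, rfl, rfl⟩

section Kronecker

variable {R m n : Type*} [CommRing R] [Fintype m] [Fintype n]

theorem Matrix.kronecker_mul_self_eq_one [DecidableEq m] [DecidableEq n]
    {A : Matrix m m R} {B : Matrix n n R} (hA : A * A = 1) (hB : B * B = 1) : (A ⊗ₖ B) * (A ⊗ₖ B) = 1 := by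
  rw [← mul_kronecker_mul, hA, hB, one_kronecker_one]

theorem Matrix.kronecker_anticommute {A₁ A₂ : Matrix m m R} {B₁ B₂ : Matrix n n R}
    (hA : A₂ * A₁ = -(A₁ * A₂)) (hB : B₂ * B₁ = B₁ * B₂) :
    (A₂ ⊗ₖ B₂) * (A₁ ⊗ₖ B₁) = -((A₁ ⊗ₖ B₁) * (A₂ ⊗ₖ B₂)) := by
  rw [← mul_kronecker_mul, ← mul_kronecker_mul, hA, hB]
  ext
  simp [neg_mul]

end Kronecker

theorem PauliX_mul_self : PauliX * PauliX = 1 := by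
  simp [PauliX, one_fin_two]

theorem PauliZ_mul_self : PauliZ * PauliZ = 1 := by
  simp [PauliZ, one_fin_two]

theorem PauliZ_mul_PauliX : PauliZ * PauliX = -(PauliX * PauliZ) := by
  simp [PauliX, PauliZ]

/-- **Turnover property for the transverse field Ising model blocks.**
For all real `a, b, c` there exist real `α, β, γ` such that
`exp(−i a X⊗X) exp(−i b Z⊗I) exp(−i c X⊗X)
  = exp(−i α Z⊗I) exp(−i β X⊗X) exp(−i γ Z⊗I)`. -/
theorem tfim_turnover (a b c : ℝ) :
    ∃ α β γ : ℝ,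
      expm ((-Complex.I * (a : ℂ)) • (PauliX ⊗ₖ PauliX)) *
      expm ((-Complex.I * (b : ℂ)) • (PauliZ ⊗ₖ I2)) *
      expm ((-Complex.I * (c : ℂ)) • (PauliX ⊗ₖ PauliX)) =
      expm ((-Complex.I * (α : ℂ)) • (PauliZ ⊗ₖ I2)) *
      expm ((-Complex.I * (β : ℂ)) • (PauliX ⊗ₖ PauliX)) *
      expm ((-Complex.I * (γ : ℂ)) • (PauliZ ⊗ₖ I2)) := by
  have hXX := kronecker_mul_self_eq_one PauliX_mul_self PauliX_mul_self
  have hZI : (PauliZ ⊗ₖ I2) * (PauliZ ⊗ₖ I2) = 1 :=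
    kronecker_mul_self_eq_one PauliZ_mul_self (mul_one 1)
  have hZI_XX : (PauliZ ⊗ₖ I2) * (PauliX ⊗ₖ PauliX) = -((PauliX ⊗ₖ PauliX) * (PauliZ ⊗ₖ I2)) :=
    kronecker_anticommute PauliZ_mul_PauliX (Commute.one_left PauliX).eq
  obtain ⟨α, β, γ, h₁, h₂, h₃, h₄⟩ := Real.exists_hopf_coordinates
    (w := Real.cos b * Real.cos (a + c)) (x := Real.sin b * Real.cos (a - c))
    (y := Real.cos b * Real.sin (a + c)) (z := -(Real.sin b * Real.sin (a - c)))
    (by linear_combination Real.cos b ^ 2 * Real.sin_sq_add_cos_sq (a + c) +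
      Real.sin b ^ 2 * Real.sin_sq_add_cos_sq (a - c) + Real.sin_sq_add_cos_sq b)
  refine ⟨α, β, γ, ?_⟩
  simp only [expm]
  rw [exp_mul_exp_mul_exp_of_anticommute hXX hZI hZI_XX,
    exp_mul_exp_mul_exp_of_anticommute hZI hXX (by rw [hZI_XX, neg_neg]), hZI_XX]
  simp only [← ofReal_add, ← ofReal_sub, ← ofReal_cos, ← ofReal_sin, ← ofReal_mul, h₁, h₂, h₃, h₄]
  push_cast
  module

end
end

section
/- Define, for real parameters (a, b, c, d, f, g), the 4×4 complex matrix G(a,b,c,d,f,g) := exp(−i·a·(Z ⊗ I)) · exp(−i·b·(I ⊗ Z)) · exp(−i·c·(X ⊗ X)) · exp(−i·d·(Y ⊗ Y)) · exp(−i·f·(Z ⊗ I)) · exp(−i·g·(I ⊗ Z)). Then for any two real parameter tuples (a, b, c, d, f, g) and (a', b', c', d', f', g') there exists a real parameter tuple (a'', b'', c'', d'', f'', g'') such that G(a,b,c,d,f,g) · G(a',b',c',d',f',g') = G(a'',b'',c'',d'',f'',g''). This is the fusion property for the blocks of the transverse field XY model. -/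
open Matrix
open scoped Kronecker

noncomputable section

/-- The Pauli matrix `Y`. -/
def PauliY : Matrix (Fin 2) (Fin 2) ℂ := !![0, -Complex.I; Complex.I, 0]

/-- The TFXY block
`G(a,b,c,d,f,g) = exp(−i a Z⊗I) exp(−i b I⊗Z) exp(−i c X⊗X) exp(−i d Y⊗Y)
  exp(−i f Z⊗I) exp(−i g I⊗Z)`. -/
def G (a b c d f g : ℝ) : Matrix (Fin 2 × Fin 2) (Fin 2 × Fin 2) ℂ :=
  expm ((-Complex.I * (a : ℂ)) • (PauliZ ⊗ₖ I2)) *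
  expm ((-Complex.I * (b : ℂ)) • (I2 ⊗ₖ PauliZ)) *
  expm ((-Complex.I * (c : ℂ)) • (PauliX ⊗ₖ PauliX)) *
  expm ((-Complex.I * (d : ℂ)) • (PauliY ⊗ₖ PauliY)) *
  expm ((-Complex.I * (f : ℂ)) • (PauliZ ⊗ₖ I2)) *
  expm ((-Complex.I * (g : ℂ)) • (I2 ⊗ₖ PauliZ))

/-!
Each of `Z ⊗ I`, `I ⊗ Z`, `X ⊗ X`, `Y ⊗ Y` commutes with the parity `Z ⊗ Z`; on the even-parity
subspace `span {|00⟩, |11⟩}` they act as `Z, Z, X, -X` and on the odd one `span {|01⟩, |10⟩}` as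
`Z, -Z, X, X`. Hence `G(a,b,c,d,f,g)` is block diagonal with the ZXZ Euler products
`e^{-i(a+b)Z} e^{-i(c-d)X} e^{-i(f+g)Z}` and `e^{-i(a-b)Z} e^{-i(c+d)X} e^{-i(f-g)Z}` as blocks.
Every element of `SU(2)` has ZXZ Euler angles, so the product of two blocks is again an Euler
product, and since `(a, b) ↦ (a + b, a - b)` is invertible the six resulting angles are those of
some block `G(a'',b'',c'',d'',f'',g'')`.
-/

lemma Real.exists_cos_eq_and_sin_eq {x y : ℝ} (h : x ^ 2 + y ^ 2 = 1) :
    ∃ β : ℝ, Real.cos β = x ∧ Real.sin β = y := by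
  set z : ℂ := ⟨x, y⟩
  have hz : ‖z‖ = 1 := by
    rw [Complex.norm_def, Complex.normSq_mk, Real.sqrt_eq_one]
    linear_combination h
  have hz₀ : z ≠ 0 := norm_ne_zero_iff.1 (by rw [hz]; exact one_ne_zero)
  exact ⟨z.arg, by rw [Complex.cos_arg hz₀, hz, div_one], by rw [Complex.sin_arg, hz, div_one]⟩

namespace Matrix

section SpecialUnitary

variable {R : Type*} [CommRing R] [StarRing R]

lemma of_mem_specialUnitaryGroup_fin_two_iff {a b c d : R} :
    !![a, b; c, d] ∈ specialUnitaryGroup (Fin 2) R ↔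
      d = star a ∧ c = -star b ∧ a * star a + b * star b = 1 := by
  trans ((a * star a + b * star b = 1 ∧ a * star c + b * star d = 0) ∧
    c * star a + d * star b = 0 ∧ c * star c + d * star d = 1) ∧ a * d - b * c = 1
  · simp [mem_specialUnitaryGroup_iff, mem_unitaryGroup_iff, ← Matrix.ext_iff,
      Fin.forall_fin_succ, star_eq_conjTranspose, vecMul, dotProduct, Fin.sum_univ_two]
  constructor
  · rintro ⟨⟨⟨h₀₀, -⟩, h₁₀, -⟩, hdet⟩
    refine ⟨?_, ?_, h₀₀⟩
    · linear_combination (-d) * h₀₀ + star a * hdet + b * h₁₀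
    · linear_combination (-c) * h₀₀ - star b * hdet + a * h₁₀
  · rintro ⟨rfl, rfl, h⟩
    simp only [star_neg, star_star]
    exact ⟨⟨⟨h, by ring⟩, by ring, by linear_combination h⟩, by linear_combination h⟩

lemma mem_specialUnitaryGroup_fin_two_iff {M : Matrix (Fin 2) (Fin 2) R} :
    M ∈ specialUnitaryGroup (Fin 2) R ↔
      M 1 1 = star (M 0 0) ∧ M 1 0 = -star (M 0 1) ∧
        M 0 0 * star (M 0 0) + M 0 1 * star (M 0 1) = 1 := by
  rw [← M.etaExpand_eq]
  exact of_mem_specialUnitaryGroup_fin_two_iff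

lemma specialUnitaryGroup_fin_two_ext {M N : Matrix (Fin 2) (Fin 2) R}
    (hM : M ∈ specialUnitaryGroup (Fin 2) R) (hN : N ∈ specialUnitaryGroup (Fin 2) R)
    (h₀₀ : M 0 0 = N 0 0) (h₀₁ : M 0 1 = N 0 1) : M = N := by
  obtain ⟨hM₁₁, hM₁₀, -⟩ := mem_specialUnitaryGroup_fin_two_iff.1 hM
  obtain ⟨hN₁₁, hN₁₀, -⟩ := mem_specialUnitaryGroup_fin_two_iff.1 hN
  ext i j
  fin_cases i <;> fin_cases j <;> simp [h₀₀, h₀₁, hM₁₁, hM₁₀, hN₁₁, hN₁₀]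

end SpecialUnitary

theorem exp_reindex {m n 𝔸 : Type*} [Fintype m] [DecidableEq m] [Fintype n] [DecidableEq n]
    [Ring 𝔸] [TopologicalSpace 𝔸] [IsTopologicalRing 𝔸] [T2Space 𝔸] [Algebra ℚ 𝔸]
    (e : m ≃ n) (A : Matrix m m 𝔸) :
    NormedSpace.exp (reindex e e A) = reindex e e (NormedSpace.exp A) := by
  let φ := reindexAlgEquiv ℚ 𝔸 e
  have hφ : ∀ M, φ M = reindex e e M := fun _ => rfl
  simp_rw [NormedSpace.exp_eq_tsum_rat, ← hφ, ← map_pow, ← map_smul]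
  exact (Function.LeftInverse.map_tsum _ (g := φ.toAddEquiv)
    (continuous_id.matrix_reindex e e) (continuous_id.matrix_reindex e.symm e.symm)
    φ.left_inv).symm

lemma exp_smul_add_smul {m : Type*} [Fintype m] [DecidableEq m] (A : Matrix m m ℂ) (s t : ℂ) :
    NormedSpace.exp (s • A + t • A) = NormedSpace.exp (s • A) * NormedSpace.exp (t • A) :=
  exp_add_of_commute _ _ (((Commute.refl A).smul_left s).smul_right t)

end Matrix

namespace TFXY

open Complex

def rotZ (t : ℝ) : Matrix (Fin 2) (Fin 2) ℂ :=
  !![exp (-t * I), 0; 0, exp (t * I)]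

def rotX (t : ℝ) : Matrix (Fin 2) (Fin 2) ℂ :=
  !![(Real.cos t : ℂ), -I * Real.sin t; -I * Real.sin t, (Real.cos t : ℂ)]

lemma exp_smul_pauliZ (t : ℝ) : NormedSpace.exp ((-I * t) • PauliZ) = rotZ t := by
  have h : (-I * t) • PauliZ = diagonal ![-t * I, t * I] := by
    ext i j
    fin_cases i <;> fin_cases j <;> simp [PauliZ] <;> ring
  rw [h, exp_diagonal]
  ext i j
  fin_cases i <;> fin_cases j <;> simp [rotZ, Pi.coe_exp, ← Complex.exp_eq_exp_ℂ]

lemma exp_smul_pauliX (t : ℝ) : NormedSpace.exp ((-I * t) • PauliX) = rotX t := by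
  set H : Matrix (Fin 2) (Fin 2) ℂ := !![1, 1; 1, -1]
  have hH : H⁻¹ = (1 / 2 : ℂ) • H := by
    refine inv_eq_left_inv ?_
    ext i j
    fin_cases i <;> fin_cases j <;> norm_num [H]
  have hHu : IsUnit H := (isUnit_iff_isUnit_det H).2 (by norm_num [H, det_fin_two_of])
  have hX : (-I * t) • PauliX = H * ((-I * t) • PauliZ) * H⁻¹ := by
    rw [hH]
    ext i j
    fin_cases i <;> fin_cases j <;>
      norm_num [H, PauliX, PauliZ, mul_apply, Fin.sum_univ_two] <;> ring
  have hexp : exp (-t * I) = cos t - sin t * I := by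
    rw [exp_mul_I, cos_neg, sin_neg, sub_eq_add_neg, neg_mul]
  rw [hX, exp_conj _ _ hHu, exp_smul_pauliZ, hH, rotZ, hexp, exp_mul_I]
  ext i j
  fin_cases i <;> fin_cases j <;>
    simp [H, rotX, mul_apply, Fin.sum_univ_two] <;> ring

lemma rotZ_add (s t : ℝ) : rotZ (s + t) = rotZ s * rotZ t := by
  rw [← exp_smul_pauliZ, ← exp_smul_pauliZ, ← exp_smul_pauliZ, ← exp_smul_add_smul, ← add_smul]
  push_cast
  ring_nf

lemma rotX_add (s t : ℝ) : rotX (s + t) = rotX s * rotX t := by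
  rw [← exp_smul_pauliX, ← exp_smul_pauliX, ← exp_smul_pauliX, ← exp_smul_add_smul, ← add_smul]
  push_cast
  ring_nf

lemma rotZ_mem_specialUnitaryGroup (t : ℝ) : rotZ t ∈ specialUnitaryGroup (Fin 2) ℂ := by
  rw [rotZ, of_mem_specialUnitaryGroup_fin_two_iff, star_def, ← exp_conj, ← exp_add]
  simp

lemma rotX_mem_specialUnitaryGroup (t : ℝ) : rotX t ∈ specialUnitaryGroup (Fin 2) ℂ := by
  rw [rotX, of_mem_specialUnitaryGroup_fin_two_iff]
  simp only [star_def, map_mul, map_neg, conj_ofReal, conj_I]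
  refine ⟨trivial, by ring, ?_⟩
  have h : ((Real.cos t : ℂ) ^ 2 + (Real.sin t : ℂ) ^ 2) = 1 := by
    exact_mod_cast Real.cos_sq_add_sin_sq t
  linear_combination (-(Real.sin t : ℂ) ^ 2) * I_sq + h

def euler (α β γ : ℝ) : Matrix (Fin 2) (Fin 2) ℂ := rotZ α * rotX β * rotZ γ

lemma euler_mem_specialUnitaryGroup (α β γ : ℝ) :
    euler α β γ ∈ specialUnitaryGroup (Fin 2) ℂ :=
  mul_mem (mul_mem (rotZ_mem_specialUnitaryGroup α) (rotX_mem_specialUnitaryGroup β))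
    (rotZ_mem_specialUnitaryGroup γ)

lemma euler_apply_zero_zero (α β γ : ℝ) :
    euler α β γ 0 0 = Real.cos β * exp (↑(-(α + γ)) * I) := by
  rw [show (↑(-(α + γ)) * I : ℂ) = -α * I + -γ * I by push_cast; ring, exp_add]
  simp only [euler, rotZ, rotX, mul_fin_two, of_apply, cons_val', cons_val_zero, empty_val',
    cons_val_fin_one]
  ring

lemma euler_apply_zero_one (α β γ : ℝ) :
    euler α β γ 0 1 = Real.sin β * exp (↑(γ - α - Real.pi / 2) * I) := by
  rw [show (↑(γ - α - Real.pi / 2) * I : ℂ) = -α * I + γ * I + -Real.pi / 2 * I by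
      push_cast; ring,
    exp_add, exp_add, exp_neg_pi_div_two_mul_I]
  simp only [euler, rotZ, rotX, mul_fin_two, of_apply, cons_val', cons_val_zero, cons_val_one,
    empty_val', cons_val_fin_one]
  ring

lemma exists_euler_eq {A : Matrix (Fin 2) (Fin 2) ℂ} (hA : A ∈ specialUnitaryGroup (Fin 2) ℂ) :
    ∃ α β γ : ℝ, euler α β γ = A := by
  set u := A 0 0
  set v := A 0 1
  have hnorm : ‖u‖ ^ 2 + ‖v‖ ^ 2 = 1 := by
    have h := (mem_specialUnitaryGroup_fin_two_iff.1 hA).2.2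
    simp only [star_def, mul_conj] at h
    rw [Complex.sq_norm, Complex.sq_norm]
    exact_mod_cast h
  obtain ⟨β, hcos, hsin⟩ := Real.exists_cos_eq_and_sin_eq hnorm
  -- Match the polar forms of `euler_apply_zero_zero` and `euler_apply_zero_one` with those of
  -- `u` and `v`; the second row is then forced by `SU(2)`.
  refine ⟨-(arg u + arg v + Real.pi / 2) / 2, β, (arg v + Real.pi / 2 - arg u) / 2,
    specialUnitaryGroup_fin_two_ext (euler_mem_specialUnitaryGroup _ _ _) hA ?_ ?_⟩
  · rw [euler_apply_zero_zero, hcos]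
    convert norm_mul_exp_arg_mul_I u using 4
    push_cast
    ring
  · rw [euler_apply_zero_one, hsin]
    convert norm_mul_exp_arg_mul_I v using 4
    push_cast
    ring

lemma exists_euler_mul_euler_eq (α β γ α' β' γ' : ℝ) :
    ∃ α'' β'' γ'' : ℝ, euler α β γ * euler α' β' γ' = euler α'' β'' γ'' :=
  (exists_euler_eq (mul_mem (euler_mem_specialUnitaryGroup α β γ)
    (euler_mem_specialUnitaryGroup α' β' γ'))).imp fun _ ⟨_, _, h⟩ => ⟨_, _, h.symm⟩

section ParityBlock

variable {R : Type*} [CommRing R]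

/-- Labels a basis state by its first qubit and its parity. -/
def parityEquiv : Fin 2 × Fin 2 ≃ Fin 2 × Fin 2 where
  toFun p := (p.1, p.1 + p.2)
  invFun p := (p.1, p.1 + p.2)
  left_inv p := by fin_cases p <;> rfl
  right_inv p := by fin_cases p <;> rfl

/-- The two-qubit matrix acting as `A` on the even-parity subspace `span {|00⟩, |11⟩}` and as
`B` on the odd-parity subspace `span {|01⟩, |10⟩}`, each in the basis labelled by the first
qubit. -/
def parityBlock (A B : Matrix (Fin 2) (Fin 2) R) : Matrix (Fin 2 × Fin 2) (Fin 2 × Fin 2) R :=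
  reindex parityEquiv parityEquiv (blockDiagonal ![A, B])

lemma parityBlock_mul (A B A' B' : Matrix (Fin 2) (Fin 2) R) :
    parityBlock A B * parityBlock A' B' = parityBlock (A * A') (B * B') := by
  simp only [parityBlock, reindex_apply, submatrix_mul_equiv, ← blockDiagonal_mul]
  congr 2
  ext k : 1
  fin_cases k <;> rfl

lemma smul_parityBlock (s : R) (A B : Matrix (Fin 2) (Fin 2) R) :
    s • parityBlock A B = parityBlock (s • A) (s • B) := by
  have h : s • blockDiagonal ![A, B] = blockDiagonal ![s • A, s • B] := by
    rw [← blockDiagonal_smul, smul_cons, smul_cons, smul_empty]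
  rw [parityBlock, parityBlock, ← h]
  rfl

end ParityBlock

lemma exp_parityBlock (A B : Matrix (Fin 2) (Fin 2) ℂ) :
    NormedSpace.exp (parityBlock A B) =
      parityBlock (NormedSpace.exp A) (NormedSpace.exp B) := by
  rw [parityBlock, parityBlock, exp_reindex, exp_blockDiagonal]
  congr 2
  ext k : 1
  -- `Pi.coe_exp` needs a norm on matrices, which Mathlib only provides as a scoped instance.
  open scoped Norms.Operator in
  fin_cases k <;> exact Pi.coe_exp _ _

lemma pauliZ_kronecker_one : PauliZ ⊗ₖ I2 = parityBlock PauliZ PauliZ := by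
  ext p q
  fin_cases p <;> fin_cases q <;>
    simp [parityBlock, parityEquiv, blockDiagonal_apply, PauliZ, I2, one_apply]

lemma one_kronecker_pauliZ : I2 ⊗ₖ PauliZ = parityBlock PauliZ (-PauliZ) := by
  ext p q
  fin_cases p <;> fin_cases q <;>
    simp [parityBlock, parityEquiv, blockDiagonal_apply, PauliZ, I2, one_apply]

lemma pauliX_kronecker_pauliX : PauliX ⊗ₖ PauliX = parityBlock PauliX PauliX := by
  ext p q
  fin_cases p <;> fin_cases q <;>
    simp [parityBlock, parityEquiv, blockDiagonal_apply, PauliX]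

lemma pauliY_kronecker_pauliY : PauliY ⊗ₖ PauliY = parityBlock (-PauliX) PauliX := by
  ext p q
  fin_cases p <;> fin_cases q <;>
    simp [parityBlock, parityEquiv, blockDiagonal_apply, PauliX, PauliY]

lemma expm_smul_parityBlock (s : ℂ) (A B : Matrix (Fin 2) (Fin 2) ℂ) :
    expm (s • parityBlock A B) =
      parityBlock (NormedSpace.exp (s • A)) (NormedSpace.exp (s • B)) := by
  rw [expm, smul_parityBlock, exp_parityBlock]

lemma smul_neg_eq_smul_ofReal_neg (t : ℝ) (A : Matrix (Fin 2) (Fin 2) ℂ) :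
    (-I * t) • -A = (-I * ↑(-t)) • A := by
  push_cast
  rw [smul_neg, ← neg_smul]
  ring_nf

lemma G_eq_parityBlock (a b c d f g : ℝ) :
    G a b c d f g =
      parityBlock (euler (a + b) (c - d) (f + g)) (euler (a - b) (c + d) (f - g)) := by
  simp only [G, pauliZ_kronecker_one, one_kronecker_pauliZ, pauliX_kronecker_pauliX,
    pauliY_kronecker_pauliY, expm_smul_parityBlock, smul_neg_eq_smul_ofReal_neg, exp_smul_pauliZ,
    exp_smul_pauliX, parityBlock_mul, euler, sub_eq_add_neg, rotZ_add, rotX_add]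
  simp only [mul_assoc]

end TFXY

open TFXY

/-- **Fusion property for the transverse field XY model blocks.**
The product of any two TFXY blocks is again a TFXY block. -/
theorem tfxy_fusion (a b c d f g a' b' c' d' f' g' : ℝ) :
    ∃ a'' b'' c'' d'' f'' g'' : ℝ,
      G a b c d f g * G a' b' c' d' f' g' = G a'' b'' c'' d'' f'' g'' := by
  obtain ⟨α₁, β₁, γ₁, h₁⟩ :=
    exists_euler_mul_euler_eq (a + b) (c - d) (f + g) (a' + b') (c' - d') (f' + g')
  obtain ⟨α₂, β₂, γ₂, h₂⟩ :=
    exists_euler_mul_euler_eq (a - b) (c + d) (f - g) (a' - b') (c' + d') (f' - g')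
  refine ⟨(α₁ + α₂) / 2, (α₁ - α₂) / 2, (β₁ + β₂) / 2, (β₂ - β₁) / 2, (γ₁ + γ₂) / 2,
    (γ₁ - γ₂) / 2, ?_⟩
  rw [G_eq_parityBlock, G_eq_parityBlock, G_eq_parityBlock, parityBlock_mul, h₁, h₂]
  congr 2 <;> ring

end
end
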